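/- arXiv:2503.17435 — 3 statements merged into one kernel-verified Lean document; each statement's English description precedes it below -/
import Mathlib

section
/- Let S be a finite set of size N, ρ : S → ℝ nonnegative, 1 ≤ p ≤ N, and B a uniformly random p-subset of S. Then the second moment of the estimator ρ̃ = (N/p) Σ_{j∈B} ρ(j) satisfies E[ρ̃²] ≤ (N/p) (Σ_{j∈S} ρ(j))². -/
/-!
Write `X B = ∑ j ∈ B, ρ j` and `T = ∑ j ∈ S, ρ j`. Since `ρ ≥ 0`, every batch sum satisfies
`0 ≤ X B ≤ T`, hence `X B ^ 2 ≤ T * X B`. Double counting pairs `(j, B)` with `j ∈ B` shows that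
each `j` lies in `(N - 1).choose (p - 1)` batches, so `E[X B] = (p / N) * T`. Therefore
`E[ρ̃²] = (N / p)² E[X B ^ 2] ≤ (N / p)² * T * (p / N) * T = (N / p) * T²`.
-/

open Finset

namespace Finset

variable {α M : Type*} [AddCommMonoid M]

lemma card_filter_mem_powersetCard [DecidableEq α] {s : Finset α} {n : ℕ} {a : α} (ha : a ∈ s)
    (hn : n ≠ 0) :
    #{t ∈ s.powersetCard n | a ∈ t} = (#s - 1).choose (n - 1) := by
  have hsingleton : #({a} : Finset α) ≤ n := by rw [card_singleton]; omega
  simpa only [singleton_subset_iff, card_singleton] using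
    card_filter_powersetCard_subset {a} s n (singleton_subset_iff.2 ha) hsingleton

lemma sum_powersetCard_sum (s : Finset α) {n : ℕ} (hn : n ≠ 0) (f : α → M) :
    ∑ t ∈ s.powersetCard n, ∑ i ∈ t, f i = (#s - 1).choose (n - 1) • ∑ i ∈ s, f i := by
  classical
  rw [sum_comm' (t' := s) (s' := fun i ↦ {t ∈ s.powersetCard n | i ∈ t}), smul_sum]
  · refine sum_congr rfl fun i hi ↦ ?_
    rw [sum_const, card_filter_mem_powersetCard hi hn]
  · intro t i
    simp only [mem_filter, mem_powersetCard]
    exact ⟨fun ⟨⟨hts, htn⟩, hit⟩ ↦ ⟨⟨⟨hts, htn⟩, hit⟩, hts hit⟩,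
      fun ⟨⟨⟨hts, htn⟩, hit⟩, _⟩ ↦ ⟨⟨hts, htn⟩, hit⟩⟩

lemma card_smul_sum_powersetCard_sum (s : Finset α) (n : ℕ) (f : α → M) :
    #s • ∑ t ∈ s.powersetCard n, ∑ i ∈ t, f i = (n * #(s.powersetCard n)) • ∑ i ∈ s, f i := by
  rcases n with _ | k
  · simp
  rw [sum_powersetCard_sum s k.add_one_ne_zero, smul_smul, card_powersetCard, Nat.add_sub_cancel]
  congr 1
  rcases h : #s with _ | m
  · simp
  rw [Nat.add_sub_cancel, Nat.add_one_mul_choose_eq, mul_comm]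

end Finset

theorem stmt_3_general {α : Type*} (S : Finset α) (N p : ℕ)
    (hN : S.card = N) (hp1 : 1 ≤ p)
    (ρ : α → ℝ) (hρ : ∀ j ∈ S, 0 ≤ ρ j) :
    (∑ B ∈ S.powersetCard p, (((N : ℝ) / (p : ℝ)) * ∑ j ∈ B, ρ j) ^ 2) /
      ((S.powersetCard p).card : ℝ)
      ≤ ((N : ℝ) / (p : ℝ)) * (∑ j ∈ S, ρ j) ^ 2 := by
  set T := ∑ j ∈ S, ρ j
  set C := ((S.powersetCard p).card : ℝ)
  have hp : (p : ℝ) ≠ 0 := by positivity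
  have hT : 0 ≤ T := sum_nonneg hρ
  have hsq : ∑ B ∈ S.powersetCard p, (∑ j ∈ B, ρ j) ^ 2
      ≤ T * ∑ B ∈ S.powersetCard p, ∑ j ∈ B, ρ j := by
    rw [mul_sum]
    refine sum_le_sum fun B hB ↦ ?_
    have hBS := (mem_powersetCard.1 hB).1
    rw [sq]
    exact mul_le_mul_of_nonneg_right (sum_le_sum_of_subset_of_nonneg hBS fun j hj _ ↦ hρ j hj)
      (sum_nonneg fun j hj ↦ hρ j (hBS hj))
  have hmean : (N : ℝ) * ∑ B ∈ S.powersetCard p, ∑ j ∈ B, ρ j = p * C * T := by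
    simpa only [nsmul_eq_mul, hN, Nat.cast_mul] using card_smul_sum_powersetCard_sum S p ρ
  refine div_le_of_le_mul₀ (by positivity) (by positivity) ?_
  calc ∑ B ∈ S.powersetCard p, ((N : ℝ) / p * ∑ j ∈ B, ρ j) ^ 2
      = ((N : ℝ) / p) ^ 2 * ∑ B ∈ S.powersetCard p, (∑ j ∈ B, ρ j) ^ 2 := by
        rw [mul_sum]; simp only [mul_pow]
    _ ≤ ((N : ℝ) / p) ^ 2 * (T * ∑ B ∈ S.powersetCard p, ∑ j ∈ B, ρ j) := by gcongr
    _ = (N : ℝ) / p * T / p * (N * ∑ B ∈ S.powersetCard p, ∑ j ∈ B, ρ j) := by ring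
    _ = (N : ℝ) / p * T ^ 2 * C := by rw [hmean]; field_simp

/-- For nonnegative `ρ`, the second moment of the random batch
estimator `ρ̃ = (N/p) ∑_{j∈B} ρ j` satisfies `E[ρ̃²] ≤ (N/p) (∑_{j∈S} ρ j)²`. -/
theorem stmt_3 {α : Type*} [DecidableEq α] (S : Finset α) (N p : ℕ)
    (hN : S.card = N) (hN2 : 2 ≤ N) (hp1 : 1 ≤ p) (hpN : p ≤ N)
    (ρ : α → ℝ) (hρ : ∀ j ∈ S, 0 ≤ ρ j) :
    (∑ B ∈ S.powersetCard p, (((N : ℝ) / (p : ℝ)) * ∑ j ∈ B, ρ j) ^ 2) /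
      ((S.powersetCard p).card : ℝ)
      ≤ ((N : ℝ) / (p : ℝ)) * (∑ j ∈ S, ρ j) ^ 2 :=
  stmt_3_general S N p hN hp1 ρ hρ
end

section
/- Let S be a finite set of size N, ρ : S → ℝ nonnegative, 1 ≤ p ≤ N, and B a uniformly random p-subset of S. Then the variance of the estimator ρ̃ = (N/p) Σ_{j∈B} ρ(j) is bounded by ((N−p)/p) · (Σ_{j∈S} ρ(j))². -/
/-!
Uniformly at random, `j ∈ B` with probability `p / N`, so `ρ̃` is unbiased: its mean is
`T = ∑_{j ∈ S} ρ j`. Since `ρ ≥ 0` and `B ⊆ S`, the estimator takes values in `[0, (N / p) T]`,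
and the Bhatia–Davis inequality `Var X ≤ (M - 𝔼 X) (𝔼 X - m)` for `m ≤ X ≤ M` gives
`Var ρ̃ ≤ ((N / p) T - T) T`.
-/

theorem Nat.mul_choose_sub_one_sub_one (n : ℕ) {k : ℕ} (hk : 1 ≤ k) :
    n * (n - 1).choose (k - 1) = k * n.choose k := by
  obtain ⟨k, rfl⟩ := Nat.exists_eq_add_of_le' hk
  cases n with
  | zero => simp
  | succ n => simpa [Nat.mul_comm (k + 1)] using Nat.add_one_mul_choose_eq n k

namespace Finset

variable {α : Type*}

theorem card_filter_mem_powersetCard_s4 [DecidableEq α] {S : Finset α} {p : ℕ} (hp : 1 ≤ p)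
    {j : α} (hj : j ∈ S) :
    #{B ∈ S.powersetCard p | j ∈ B} = (#S - 1).choose (p - 1) := by
  simpa using card_filter_powersetCard_subset {j} S p (singleton_subset_iff.2 hj) hp

theorem sum_powersetCard_sum_s4 {M : Type*} [AddCommMonoid M] (S : Finset α) {p : ℕ} (hp : 1 ≤ p)
    (f : α → M) :
    ∑ B ∈ S.powersetCard p, ∑ j ∈ B, f j = (#S - 1).choose (p - 1) • ∑ j ∈ S, f j := by
  classical
  calc ∑ B ∈ S.powersetCard p, ∑ j ∈ B, f j
      = ∑ B ∈ S.powersetCard p, ∑ j ∈ S, if j ∈ B then f j else 0 := by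
        refine sum_congr rfl fun B hB => ?_
        rw [sum_ite_mem, inter_eq_right.2 (mem_powersetCard.1 hB).1]
    _ = ∑ j ∈ S, #{B ∈ S.powersetCard p | j ∈ B} • f j := by
        rw [sum_comm]
        exact sum_congr rfl fun j _ => by rw [← sum_filter, sum_const]
    _ = (#S - 1).choose (p - 1) • ∑ j ∈ S, f j := by
        rw [smul_sum]
        exact sum_congr rfl fun j hj => by rw [card_filter_mem_powersetCard_s4 hp hj]

noncomputable def uniformMean {ι : Type*} (s : Finset ι) (X : ι → ℝ) : ℝ :=
  (∑ i ∈ s, X i) / #s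

noncomputable def uniformVariance {ι : Type*} (s : Finset ι) (X : ι → ℝ) : ℝ :=
  s.uniformMean (fun i => X i ^ 2) - s.uniformMean X ^ 2

theorem uniformVariance_le_sub_mul_sub {ι : Type*} {s : Finset ι} (hs : s.Nonempty)
    {X : ι → ℝ} {m M : ℝ} (hX : ∀ i ∈ s, X i ∈ Set.Icc m M) :
    s.uniformVariance X ≤ (M - s.uniformMean X) * (s.uniformMean X - m) := by
  have hcard : (0 : ℝ) < #s := by exact_mod_cast hs.card_pos
  have hprod : 0 ≤ ∑ i ∈ s, (M - X i) * (X i - m) :=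
    sum_nonneg fun i hi => mul_nonneg (sub_nonneg.2 (hX i hi).2) (sub_nonneg.2 (hX i hi).1)
  have hexpand : ∑ i ∈ s, (M - X i) * (X i - m)
      = (M + m) * ∑ i ∈ s, X i - ∑ i ∈ s, X i ^ 2 - #s * (M * m) := by
    simp only [show ∀ x, (M - x) * (x - m) = (M + m) * x - x ^ 2 - M * m from fun x => by ring,
      sum_sub_distrib, ← mul_sum, sum_const, nsmul_eq_mul]
    ring
  unfold uniformVariance uniformMean
  rw [← sub_nonneg]
  have key : (M - (∑ i ∈ s, X i) / #s) * ((∑ i ∈ s, X i) / #s - m)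
      - ((∑ i ∈ s, X i ^ 2) / #s - ((∑ i ∈ s, X i) / #s) ^ 2)
      = (∑ i ∈ s, (M - X i) * (X i - m)) / #s := by
    rw [hexpand]; field_simp; ring
  rw [key]
  positivity

theorem uniformMean_powersetCard_estimator (S : Finset α) {p : ℕ} (hp : 1 ≤ p) (hpS : p ≤ #S)
    (ρ : α → ℝ) :
    (S.powersetCard p).uniformMean (fun B => ((#S : ℝ) / p) * ∑ j ∈ B, ρ j) = ∑ j ∈ S, ρ j := by
  have hchoose : (#S : ℝ) * ((#S - 1).choose (p - 1) : ℕ) = p * ((#S).choose p : ℕ) := by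
    exact_mod_cast Nat.mul_choose_sub_one_sub_one #S hp
  have hp0 : (p : ℝ) ≠ 0 := by positivity
  have hC0 : (((#S).choose p : ℕ) : ℝ) ≠ 0 := by exact_mod_cast (Nat.choose_pos hpS).ne'
  unfold uniformMean
  rw [← mul_sum, sum_powersetCard_sum_s4 S hp, card_powersetCard, nsmul_eq_mul, ← mul_assoc,
    div_mul_eq_mul_div, hchoose]
  field_simp

end Finset

open Finset

theorem stmt_4_general {α : Type*} (S : Finset α) (N p : ℕ)
    (hN : S.card = N) (hp1 : 1 ≤ p) (hpN : p ≤ N)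
    (ρ : α → ℝ) (hρ : ∀ j ∈ S, 0 ≤ ρ j) :
    (∑ B ∈ S.powersetCard p, (((N : ℝ) / (p : ℝ)) * ∑ j ∈ B, ρ j) ^ 2) /
        ((S.powersetCard p).card : ℝ)
      - ((∑ B ∈ S.powersetCard p, ((N : ℝ) / (p : ℝ)) * ∑ j ∈ B, ρ j) /
          ((S.powersetCard p).card : ℝ)) ^ 2
      ≤ (((N : ℝ) - (p : ℝ)) / (p : ℝ)) * (∑ j ∈ S, ρ j) ^ 2 := by
  subst hN
  set T := ∑ j ∈ S, ρ j
  have hrange : ∀ B ∈ S.powersetCard p,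
      ((#S : ℝ) / p) * ∑ j ∈ B, ρ j ∈ Set.Icc 0 ((#S / p) * T) := by
    intro B hB
    have hBS := (mem_powersetCard.1 hB).1
    exact ⟨mul_nonneg (by positivity) (sum_nonneg fun j hj => hρ j (hBS hj)),
      mul_le_mul_of_nonneg_left (sum_le_sum_of_subset_of_nonneg hBS fun j hj _ => hρ j hj)
        (by positivity)⟩
  have hmean := uniformMean_powersetCard_estimator S hp1 hpN ρ
  calc (S.powersetCard p).uniformVariance (fun B => ((#S : ℝ) / p) * ∑ j ∈ B, ρ j)
      ≤ _ := uniformVariance_le_sub_mul_sub (powersetCard_nonempty.2 hpN) hrange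
    _ = ((#S - p) / p) * T ^ 2 := by rw [hmean]; field_simp; ring

/-- For nonnegative `ρ`, the variance of the random batch estimator
`ρ̃ = (N/p) ∑_{j∈B} ρ j` is bounded by `((N−p)/p) (∑_{j∈S} ρ j)²`. -/
theorem stmt_4 {α : Type*} [DecidableEq α] (S : Finset α) (N p : ℕ)
    (hN : S.card = N) (hN2 : 2 ≤ N) (hp1 : 1 ≤ p) (hpN : p ≤ N)
    (ρ : α → ℝ) (hρ : ∀ j ∈ S, 0 ≤ ρ j) :
    (∑ B ∈ S.powersetCard p, (((N : ℝ) / (p : ℝ)) * ∑ j ∈ B, ρ j) ^ 2) /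
        ((S.powersetCard p).card : ℝ)
      - ((∑ B ∈ S.powersetCard p, ((N : ℝ) / (p : ℝ)) * ∑ j ∈ B, ρ j) /
          ((S.powersetCard p).card : ℝ)) ^ 2
      ≤ (((N : ℝ) - (p : ℝ)) / (p : ℝ)) * (∑ j ∈ S, ρ j) ^ 2 :=
  stmt_4_general S N p hN hp1 hpN ρ hρ
end

section
/- Let S be a finite set of size N ≥ 2, B a uniformly random p-subset of S with 1 ≤ p ≤ N, ρ : S → ℝ, and Q = (N/p)Σ_{k∈B} ρ(k) − Σ_{k∈S} ρ(k). Then for fixed j ∈ S, E[Q · 1_{j∈B}] = ((N−p)/(N−1)) ρ(j) − ((N−p)/(N(N−1))) Σ_{k∈S} ρ(k). -/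
open Finset

lemma count_superset {α : Type*} [DecidableEq α] (S A : Finset α) (p : ℕ)
    (hA : A ⊆ S) (hAp : A.card ≤ p) :
    ((S.powersetCard p).filter (fun B => A ⊆ B)).card
      = (S.card - A.card).choose (p - A.card) := by
  rw [← Finset.card_sdiff_of_subset hA, ← Finset.card_powersetCard]
  apply Finset.card_bij' (fun B _ => B \ A) (fun C _ => C ∪ A)
  · intro B hB
    simp only [mem_filter, mem_powersetCard] at hB
    simp only [mem_powersetCard]
    exact ⟨sdiff_subset_sdiff hB.1.1 le_rfl, by rw [card_sdiff_of_subset hB.2, hB.1.2]⟩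
  · intro C hC
    simp only [mem_powersetCard] at hC
    have hdisj : Disjoint C A := disjoint_of_subset_left hC.1 sdiff_disjoint
    simp only [mem_filter, mem_powersetCard]
    refine ⟨⟨union_subset (hC.1.trans (sdiff_subset)) hA, ?_⟩, subset_union_right⟩
    rw [card_union_of_disjoint hdisj, hC.2, Nat.sub_add_cancel hAp]
  · intro B hB
    simp only [mem_filter] at hB
    exact sdiff_union_of_subset hB.2
  · intro C hC
    simp only [mem_powersetCard] at hC
    exact union_sdiff_cancel_right (disjoint_of_subset_left hC.1 sdiff_disjoint)

/-- With a single uniform `p`-subset `B` of `S` and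
`Q = (N/p) ∑_{k∈B} ρ k − ∑_{k∈S} ρ k`, for `j ∈ S`:
`E[Q · 1_{j∈B}] = ((N−p)/(N−1)) ρ j − ((N−p)/(N(N−1))) ∑_{k∈S} ρ k`. -/
theorem stmt_12 {α : Type*} [DecidableEq α] (S : Finset α) (N p : ℕ)
    (hN : S.card = N) (hN2 : 2 ≤ N) (hp1 : 1 ≤ p) (hpN : p ≤ N)
    (ρ : α → ℝ) (j : α) (hj : j ∈ S) :
    (∑ B ∈ S.powersetCard p,
        (((N : ℝ) / (p : ℝ)) * (∑ k ∈ B, ρ k) - ∑ k ∈ S, ρ k) *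
          (if j ∈ B then (1 : ℝ) else 0)) /
      ((S.powersetCard p).card : ℝ)
      = (((N : ℝ) - (p : ℝ)) / ((N : ℝ) - 1)) * ρ j
        - (((N : ℝ) - (p : ℝ)) / ((N : ℝ) * ((N : ℝ) - 1))) * ∑ k ∈ S, ρ k := by
  classical
  set T : ℝ := ∑ k ∈ S, ρ k with hT
  set F : Finset (Finset α) := (S.powersetCard p).filter (fun B => j ∈ B) with hF
  set c1 : ℕ := (N - 1).choose (p - 1) with hc1def
  set c2 : ℕ := if 2 ≤ p then (N - 2).choose (p - 2) else 0 with hc2def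
  set C : ℕ := N.choose p with hCdef
  -- card of F
  have hc1 : F.card = c1 := by
    rw [hF]
    have : ((S.powersetCard p).filter (fun B => j ∈ B))
        = ((S.powersetCard p).filter (fun B => ({j} : Finset α) ⊆ B)) := by
      apply filter_congr; intro B _; simp
    rw [this, count_superset S {j} p (by simpa using hj) (by simpa using hp1),
      card_singleton, hN]
  -- card of pair filters
  have hc2 : ∀ k ∈ S.erase j, (F.filter (fun B => k ∈ B)).card = c2 := by
    intro k hk
    have hkj : k ≠ j := (mem_erase.1 hk).1
    have hkS : k ∈ S := (mem_erase.1 hk).2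
    have hpair : ({j, k} : Finset α).card = 2 := by
      rw [card_insert_of_notMem (by simpa using hkj.symm), card_singleton]
    rw [hF, filter_filter]
    have heq : ((S.powersetCard p).filter (fun B => j ∈ B ∧ k ∈ B))
        = ((S.powersetCard p).filter (fun B => ({j, k} : Finset α) ⊆ B)) := by
      apply filter_congr; intro B _; simp [insert_subset_iff]
    rw [heq]
    by_cases hp2 : 2 ≤ p
    · rw [count_superset S {j, k} p (by simp [insert_subset_iff, hj, hkS])
        (hpair ▸ hp2), hpair, hN, hc2def, if_pos hp2]
    · have hp : p = 1 := le_antisymm (by omega) hp1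
      rw [hc2def, if_neg hp2, Finset.card_eq_zero, Finset.filter_eq_empty_iff]
      intro B hB
      rw [mem_powersetCard] at hB
      intro hsub
      have := Finset.card_le_card hsub
      rw [hpair, hB.2, hp] at this
      omega
  -- rewrite the numerator as a sum over F
  have hnum : (∑ B ∈ S.powersetCard p,
        (((N : ℝ) / (p : ℝ)) * (∑ k ∈ B, ρ k) - T) *
          (if j ∈ B then (1 : ℝ) else 0))
      = ((N : ℝ) / (p : ℝ)) * ((ρ j) * c1 + (T - ρ j) * c2) - T * c1 := by
    have hsum : (∑ B ∈ F, ∑ k ∈ B, ρ k) = ρ j * c1 + (T - ρ j) * c2 := by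
      have h1 : ∀ B ∈ F, (∑ k ∈ B, ρ k) = ∑ k ∈ S, if k ∈ B then ρ k else 0 := by
        intro B hB
        rw [hF, mem_filter, mem_powersetCard] at hB
        rw [Finset.sum_ite_mem, Finset.inter_eq_right.mpr hB.1.1]
      rw [Finset.sum_congr rfl h1, Finset.sum_comm]
      have h2 : ∀ k ∈ S, (∑ B ∈ F, if k ∈ B then ρ k else 0)
          = ρ k * (F.filter (fun B => k ∈ B)).card := by
        intro k _
        rw [← Finset.sum_filter, Finset.sum_const, nsmul_eq_mul, mul_comm]
      rw [Finset.sum_congr rfl h2, ← Finset.add_sum_erase _ _ hj]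
      have hFj : (F.filter (fun B => j ∈ B)) = F := by
        apply Finset.filter_true_of_mem
        intro B hB; exact (mem_filter.1 hB).2
      rw [hFj, hc1]
      congr 1
      rw [Finset.sum_congr rfl (fun k hk => by rw [hc2 k hk]), ← Finset.sum_mul,
        Finset.sum_erase_eq_sub hj, ← hT]
    simp only [mul_ite, mul_one, mul_zero]
    rw [← Finset.sum_filter, ← hF, Finset.sum_sub_distrib, Finset.sum_const,
      ← Finset.mul_sum, hsum, hc1, nsmul_eq_mul]
    ring
  -- denominator
  have hden : ((S.powersetCard p).card : ℝ) = (C : ℝ) := by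
    rw [Finset.card_powersetCard, hN]
  rw [hnum, hden]
  -- real arithmetic
  have hNR : (2 : ℝ) ≤ (N : ℝ) := by exact_mod_cast hN2
  have hN0 : (N : ℝ) ≠ 0 := by linarith
  have hN1 : (N : ℝ) - 1 ≠ 0 := by linarith
  have hp0 : (p : ℝ) ≠ 0 := by positivity
  have hC0 : (C : ℝ) ≠ 0 := by
    have := Nat.choose_pos hpN
    positivity
  have e1 : (c1 : ℝ) = (p : ℝ) * C / N := by
    rw [eq_div_iff hN0]
    have h := Nat.add_one_mul_choose_eq (N - 1) (p - 1)
    simp only [Nat.succ_eq_add_one, (by omega : N - 1 + 1 = N),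
      (by omega : p - 1 + 1 = p)] at h
    have hnat : c1 * N = p * C := by rw [hc1def, hCdef, mul_comm, h, mul_comm]
    exact_mod_cast hnat
  have e2 : (c2 : ℝ) = (p : ℝ) * ((p : ℝ) - 1) * C / ((N : ℝ) * ((N : ℝ) - 1)) := by
    rw [eq_div_iff (mul_ne_zero hN0 hN1)]
    by_cases hp2 : 2 ≤ p
    · have h1 := Nat.add_one_mul_choose_eq (N - 1) (p - 1)
      simp only [Nat.succ_eq_add_one, (by omega : N - 1 + 1 = N),
        (by omega : p - 1 + 1 = p)] at h1
      have h2 := Nat.add_one_mul_choose_eq (N - 2) (p - 2)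
      have hN1' : N - 2 + 1 = N - 1 := by omega
      have hp1' : p - 2 + 1 = p - 1 := by omega
      simp only [Nat.succ_eq_add_one, hN1', hp1'] at h2
      -- h1 : N * (N-1).choose (p-1) = N.choose p * p
      -- h2 : (N-1) * (N-2).choose (p-2) = (N-1).choose (p-1) * (p-1)
      have hc2v : c2 = (N - 2).choose (p - 2) := by rw [hc2def, if_pos hp2]
      have hnat : c2 * (N * (N - 1)) = p * (p - 1) * C := by
        rw [hc2v]
        calc (N - 2).choose (p - 2) * (N * (N - 1))
            = N * ((N - 1) * (N - 2).choose (p - 2)) := by ring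
          _ = N * ((N - 1).choose (p - 1) * (p - 1)) := by rw [h2]
          _ = (N * (N - 1).choose (p - 1)) * (p - 1) := by ring
          _ = (N.choose p * p) * (p - 1) := by rw [h1]
          _ = p * (p - 1) * C := by rw [hCdef]; ring
      have hcast : ((c2 * (N * (N - 1)) : ℕ) : ℝ) = ((p * (p - 1) * C : ℕ) : ℝ) := by
        exact_mod_cast congrArg Nat.cast hnat
      push_cast [Nat.cast_sub (le_trans hp1 hpN), Nat.cast_sub hp1,
        Nat.cast_sub (by omega : 1 ≤ N)] at hcast
      linarith [hcast]
    · have hp : p = 1 := le_antisymm (by omega) hp1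
      rw [hc2def, if_neg hp2, hp]
      push_cast
      ring
  rw [e1, e2]
  field_simp
  ring
end
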